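/- Let X be a non-negative random variable satisfying Pr(X ≥ ε) ≤ exp(−2mε²) for all ε ≥ 0, where m ≥ 2 is an integer (or real with m > 1). Then E[exp(2(m−1)X²)] ≤ m. -/

import Mathlib

/-!
By the layer-cake formula with `G(t) = exp (c t²) - 1`,
`E[exp (c X²)] - 1 = ∫₀^∞ P(X ≥ t) · 2 c t exp (c t²) dt`.
Under the tail bound `P(X ≥ t) ≤ exp (-b t²)` with `c < b` the integrand is at most
`2 c t exp (-(b - c) t²)`, whose integral is `c / (b - c)`.
Hence `E[exp (c X²)] ≤ b / (b - c)`, which equals `m` for `b = 2m` and `c = 2(m - 1)`.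
-/

open MeasureTheory Set Real

theorem integral_Ioi_mul_exp_neg_mul_sq {b : ℝ} (hb : 0 < b) :
    ∫ x in Ioi 0, x * exp (-b * x ^ 2) = (2 * b)⁻¹ := by
  apply Complex.ofReal_injective
  rw [← integral_complex_ofReal]
  push_cast
  exact integral_mul_cexp_neg_mul_sq (by simpa using hb)

theorem lintegral_Ioi_ofReal_mul_exp_neg_mul_sq {b : ℝ} (hb : 0 < b) :
    ∫⁻ x in Ioi 0, ENNReal.ofReal (x * exp (-b * x ^ 2)) = ENNReal.ofReal (2 * b)⁻¹ := by
  rw [← integral_Ioi_mul_exp_neg_mul_sq hb, ofReal_integral_eq_lintegral_ofReal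
    (integrable_mul_exp_neg_mul_sq hb).integrableOn]
  filter_upwards [ae_restrict_mem measurableSet_Ioi] with x (hx : 0 < x)
  positivity

theorem hasDerivAt_exp_mul_sq (c x : ℝ) :
    HasDerivAt (fun t ↦ exp (c * t ^ 2)) (2 * c * x * exp (c * x ^ 2)) x := by
  convert ((hasDerivAt_pow 2 x).const_mul c).exp using 1
  ring

theorem integral_mul_exp_mul_sq (c x : ℝ) :
    ∫ t in 0..x, 2 * c * t * exp (c * t ^ 2) = exp (c * x ^ 2) - 1 := by
  rw [intervalIntegral.integral_eq_sub_of_hasDerivAt (fun t _ ↦ hasDerivAt_exp_mul_sq c t)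
    (by apply Continuous.intervalIntegrable; fun_prop)]
  simp

section Tail

variable {Ω : Type*} [MeasurableSpace Ω] {μ : Measure Ω} {X : Ω → ℝ} {b c : ℝ}

theorem lintegral_exp_mul_sq_sub_one_eq (hX : AEMeasurable X μ) (hX0 : 0 ≤ᵐ[μ] X)
    (hc : 0 ≤ c) :
    ∫⁻ ω, ENNReal.ofReal (exp (c * X ω ^ 2) - 1) ∂μ =
      ∫⁻ t in Ioi 0, μ {ω | t ≤ X ω} * ENNReal.ofReal (2 * c * t * exp (c * t ^ 2)) := by
  simp_rw [← integral_mul_exp_mul_sq]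
  refine lintegral_comp_eq_lintegral_meas_le_mul μ hX0 hX
    (fun t _ ↦ by apply Continuous.intervalIntegrable; fun_prop) ?_
  filter_upwards [ae_restrict_mem measurableSet_Ioi] with t (ht : 0 < t)
  positivity

theorem lintegral_exp_mul_sq_sub_one_le_of_tail (hX : AEMeasurable X μ) (hX0 : 0 ≤ᵐ[μ] X)
    (hc : 0 ≤ c) (hcb : c < b)
    (htail : ∀ ε : ℝ, 0 ≤ ε →
      μ {ω | ε ≤ X ω} ≤ ENNReal.ofReal (exp (-b * ε ^ 2))) :
    ∫⁻ ω, ENNReal.ofReal (exp (c * X ω ^ 2) - 1) ∂μ ≤ ENNReal.ofReal (c / (b - c)) := by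
  have hbc : 0 < b - c := sub_pos.2 hcb
  rw [lintegral_exp_mul_sq_sub_one_eq hX hX0 hc]
  calc ∫⁻ t in Ioi 0, μ {ω | t ≤ X ω} * ENNReal.ofReal (2 * c * t * exp (c * t ^ 2))
      ≤ ∫⁻ t in Ioi 0, ENNReal.ofReal (2 * c) *
          ENNReal.ofReal (t * exp (-(b - c) * t ^ 2)) := by
        refine setLIntegral_mono' measurableSet_Ioi fun t (ht : 0 < t) ↦ ?_
        calc μ {ω | t ≤ X ω} * ENNReal.ofReal (2 * c * t * exp (c * t ^ 2))
            ≤ ENNReal.ofReal (exp (-b * t ^ 2)) *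
                ENNReal.ofReal (2 * c * t * exp (c * t ^ 2)) :=
              mul_le_mul_left (htail t ht.le) _
          _ = ENNReal.ofReal (2 * c) * ENNReal.ofReal (t * exp (-(b - c) * t ^ 2)) := by
            rw [← ENNReal.ofReal_mul (by positivity), ← ENNReal.ofReal_mul (by positivity)]
            congr 1
            rw [show -(b - c) * t ^ 2 = -b * t ^ 2 + c * t ^ 2 by ring, exp_add]
            ring
    _ = ENNReal.ofReal (c / (b - c)) := by
      rw [lintegral_const_mul' _ _ ENNReal.ofReal_ne_top,
        lintegral_Ioi_ofReal_mul_exp_neg_mul_sq hbc, ← ENNReal.ofReal_mul (by positivity)]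
      congr 1
      field_simp

theorem integral_exp_mul_sq_le_of_tail [IsProbabilityMeasure μ] (hX : AEMeasurable X μ)
    (hX0 : 0 ≤ᵐ[μ] X) (hc : 0 ≤ c) (hcb : c < b)
    (htail : ∀ ε : ℝ, 0 ≤ ε →
      μ {ω | ε ≤ X ω} ≤ ENNReal.ofReal (exp (-b * ε ^ 2))) :
    ∫ ω, exp (c * X ω ^ 2) ∂μ ≤ b / (b - c) := by
  have hbc : 0 < b - c := sub_pos.2 hcb
  have hsplit : ∀ ω, ENNReal.ofReal (exp (c * X ω ^ 2)) =
      ENNReal.ofReal (exp (c * X ω ^ 2) - 1) + 1 := fun ω ↦ by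
    rw [← ENNReal.ofReal_one, ← ENNReal.ofReal_add _ zero_le_one, sub_add_cancel]
    exact sub_nonneg.2 (one_le_exp (by positivity))
  rw [integral_eq_lintegral_of_nonneg_ae (ae_of_all _ fun ω ↦ (exp_pos _).le)
    (by fun_prop)]
  refine ENNReal.toReal_le_of_le_ofReal (div_pos (hc.trans_lt hcb) hbc).le ?_
  calc ∫⁻ ω, ENNReal.ofReal (exp (c * X ω ^ 2)) ∂μ
      = ∫⁻ ω, ENNReal.ofReal (exp (c * X ω ^ 2) - 1) ∂μ + 1 := by
        simp_rw [hsplit]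
        rw [lintegral_add_right _ measurable_const, lintegral_one, measure_univ]
    _ ≤ ENNReal.ofReal (c / (b - c)) + ENNReal.ofReal 1 := by
        rw [ENNReal.ofReal_one]
        gcongr
        exact lintegral_exp_mul_sq_sub_one_le_of_tail hX hX0 hc hcb htail
    _ = ENNReal.ofReal (b / (b - c)) := by
        rw [← ENNReal.ofReal_add (by positivity) zero_le_one]
        congr 1
        field_simp
        ring

end Tail

/-- If X ≥ 0 satisfies Pr(X ≥ ε) ≤ exp(−2mε²) for all ε ≥ 0 with m > 1,
then E[exp(2(m−1)X²)] ≤ m. -/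
theorem exp_moment_of_subgaussian_tail {Ω : Type*} [MeasurableSpace Ω]
    (ℙ : Measure Ω) [IsProbabilityMeasure ℙ]
    (X : Ω → ℝ) (hX : Measurable X) (hX0 : ∀ ω, 0 ≤ X ω)
    (m : ℝ) (hm : 1 < m)
    (htail : ∀ ε : ℝ, 0 ≤ ε → ℙ {ω | ε ≤ X ω} ≤ ENNReal.ofReal (Real.exp (-2 * m * ε ^ 2))) :
    ∫ ω, Real.exp (2 * (m - 1) * (X ω) ^ 2) ∂ℙ ≤ m := by
  have h := integral_exp_mul_sq_le_of_tail (b := 2 * m) hX.aemeasurable (ae_of_all _ hX0)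
    (by linarith : 0 ≤ 2 * (m - 1)) (by linarith) fun ε hε ↦ by
      simpa only [neg_mul] using htail ε hε
  rwa [show 2 * m / (2 * m - 2 * (m - 1)) = m by ring] at h
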